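/- Let $\phi \in \mathrm{L}^1(\mathbb{R})$ with $\phi \geq 0$ and $\int_\mathbb{R} \phi(x)\,dx = 1$, and let $R, L > 0$. Then $\int_{-R}^R \int_{-R}^R a\, \phi(a(s-\hat{s}))\, e^{-i(s-\hat{s})\sigma}\, ds\, d\hat{s} \to 2R$ as $a \to \infty$, uniformly for $\sigma \in [-L, L]$. -/

import Mathlib

/-!
Substituting `u = a (s - t)` turns the inner integral into
`∫ u in a(-R-t)..a(R-t), φ u * exp (-(I * u * (σ / a)))`. For `|t| < R` the window exhausts `ℝ`
and the frequency `σ / a` tends to `0` uniformly for `σ ∈ [-L, L]`, so by dominated convergence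
(bound `|φ|`) the inner integral tends to `∫ φ = 1`; a second dominated convergence (bound
`∫ |φ|`) gives `2R` for the outer one. Uniformity in `σ` comes for free by running both limits
along the filter `atTop ×ˢ 𝓟 [-L, L]`.
-/

open MeasureTheory Filter Set Complex Topology

lemma tendstoUniformlyOn_const_of_tendsto {ι α β : Type*} [UniformSpace β] {F : ι → α → β}
    {c : β} {p : Filter ι} {s : Set α}
    (h : Tendsto (fun q : ι × α => F q.1 q.2) (p ×ˢ 𝓟 s) (𝓝 c)) :
    TendstoUniformlyOn F (fun _ => c) p s :=
  tendstoUniformlyOn_iff_tendsto.2 <| (tendsto_const_nhds.prodMk_nhds h).mono_right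
    (nhds_le_uniformity c)

lemma norm_intervalIntegral_le_integral_norm {E : Type*} [NormedAddCommGroup E]
    [NormedSpace ℝ E] {f : ℝ → E} (hf : Integrable f) (a b : ℝ) :
    ‖∫ x in a..b, f x‖ ≤ ∫ x, ‖f x‖ := by
  rw [intervalIntegral.norm_integral_eq_norm_integral_uIoc]
  exact (norm_integral_le_integral_norm _).trans
    (setIntegral_le_integral hf.norm (ae_of_all _ fun _ => norm_nonneg _))

lemma MeasureTheory.Integrable.continuous_intervalIntegral {E : Type*} [NormedAddCommGroup E]
    [NormedSpace ℝ E] {g : ℝ → E} (hg : Integrable g) {lo hi : ℝ → ℝ} (hlo : Continuous lo)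
    (hhi : Continuous hi) :
    Continuous fun t => ∫ u in lo t..hi t, g u := by
  have h := hg.continuous_primitive 0
  convert (h.comp hhi).sub (h.comp hlo) using 2 with t
  exact (intervalIntegral.integral_interval_sub_left hg.intervalIntegrable
    hg.intervalIntegrable).symm

lemma norm_mul_exp_neg_I_mul (z : ℂ) (u ω : ℝ) : ‖z * exp (-(I * u * ω))‖ = ‖z‖ := by
  simp [norm_exp]

lemma MeasureTheory.Integrable.mul_exp_neg_I_mul {f : ℝ → ℂ} (hf : Integrable f) (ω : ℝ) :
    Integrable fun u : ℝ => f u * exp (-(I * u * ω)) :=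
  hf.mono (hf.aestronglyMeasurable.mul (by fun_prop : Continuous fun u : ℝ =>
    exp (-(I * u * ω))).aestronglyMeasurable)
    (ae_of_all _ fun u => (norm_mul_exp_neg_I_mul (f u) u ω).le)

theorem tendsto_intervalIntegral_mul_exp_neg_I_mul {ι : Type*} {l : Filter ι}
    [l.IsCountablyGenerated] {f : ℝ → ℂ} (hf : Integrable f) {lo hi ω : ι → ℝ}
    (hlo : Tendsto lo l atBot) (hhi : Tendsto hi l atTop) (hω : Tendsto ω l (𝓝 0)) :
    Tendsto (fun i => ∫ u in lo i..hi i, f u * exp (-(I * u * ω i))) l (𝓝 (∫ u, f u)) := by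
  have hle : ∀ᶠ i in l, lo i ≤ hi i :=
    ((hlo.eventually_le_atBot 0).and (hhi.eventually_ge_atTop 0)).mono fun _ h => h.1.trans h.2
  refine Tendsto.congr' (hle.mono fun i h => ?_) <|
    tendsto_integral_filter_of_dominated_convergence (fun u => ‖f u‖)
      (F := fun i => (Ioc (lo i) (hi i)).indicator fun u => f u * exp (-(I * u * ω i)))
      (Eventually.of_forall fun i =>
        ((hf.mul_exp_neg_I_mul (ω i)).aestronglyMeasurable.indicator measurableSet_Ioc))
      (Eventually.of_forall fun i => ae_of_all _ fun u =>
        (norm_indicator_le_norm_self _ u).trans (norm_mul_exp_neg_I_mul (f u) u (ω i)).le)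
      hf.norm (ae_of_all _ fun u => ?_)
  · dsimp only
    rw [integral_indicator measurableSet_Ioc, intervalIntegral.integral_of_le h]
  have hmem : ∀ᶠ i in l, u ∈ Ioc (lo i) (hi i) :=
    (hlo.eventually_lt_atBot u).and (hhi.eventually_ge_atTop u)
  have hexp : Tendsto (fun i => f u * exp (-(I * u * ω i))) l
      (𝓝 (f u * exp (-(I * u * (0 : ℝ))))) :=
    ((by fun_prop : Continuous fun w : ℝ => f u * exp (-(I * u * w))).tendsto 0).comp hω
  rw [ofReal_zero, mul_zero, neg_zero, exp_zero, mul_one] at hexp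
  exact hexp.congr' (hmem.mono fun i hi => (indicator_of_mem hi _).symm)

lemma intervalIntegral_dilated_mul_exp (φ : ℝ → ℝ) {a : ℝ} (ha : a ≠ 0) (α β t σ : ℝ) :
    ∫ s in α..β, ((a * φ (a * (s - t)) : ℝ) : ℂ) * exp (-(I * (s - t) * σ)) =
      ∫ u in a * (α - t)..a * (β - t), (φ u : ℂ) * exp (-(I * u * ((σ / a : ℝ) : ℂ))) := by
  rw [mul_sub, mul_sub, ← smul_inv_smul₀ ha (∫ u in a * α - a * t.._, _),
    ← intervalIntegral.integral_comp_mul_sub _ ha, ← intervalIntegral.integral_smul]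
  refine intervalIntegral.integral_congr fun s _ => ?_
  have ha' : (a : ℂ) ≠ 0 := ofReal_ne_zero.2 ha
  simp only [real_smul]
  push_cast
  rw [mul_sub a, mul_assoc]
  congr 3
  field_simp

lemma tendsto_div_fst_atTop_prod_Icc (L : ℝ) :
    Tendsto (fun q : ℝ × ℝ => q.2 / q.1) (atTop ×ˢ 𝓟 (Icc (-L) L)) (𝓝 0) := by
  have hbdd : ∀ᶠ q : ℝ × ℝ in atTop ×ˢ 𝓟 (Icc (-L) L), ‖q.2‖ ≤ L :=
    (tendsto_principal.1 tendsto_snd).mono fun q hq => abs_le.2 hq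
  simp_rw [div_eq_mul_inv]
  exact isBoundedUnder_le_mul_tendsto_zero (isBoundedUnder_of_eventually_le hbdd)
    (tendsto_inv_atTop_zero.comp tendsto_fst)

section Window

variable {f : ℝ → ℂ} {R : ℝ}

lemma tendsto_integral_window (hf : Integrable f) {t : ℝ} (ht : t ∈ Ioo (-R) R) (L : ℝ) :
    Tendsto (fun q : ℝ × ℝ => ∫ u in q.1 * (-R - t)..q.1 * (R - t),
        f u * exp (-(I * u * ((q.2 / q.1 : ℝ) : ℂ))))
      (atTop ×ˢ 𝓟 (Icc (-L) L)) (𝓝 (∫ u, f u)) :=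
  tendsto_intervalIntegral_mul_exp_neg_I_mul hf
    (tendsto_fst.atTop_mul_const_of_neg (show -R - t < 0 by linarith [ht.1]))
    (tendsto_fst.atTop_mul_const (show 0 < R - t by linarith [ht.2]))
    (tendsto_div_fst_atTop_prod_Icc L)

lemma tendsto_integral_integral_window (hf : Integrable f) (hR : 0 ≤ R) (L : ℝ) :
    Tendsto (fun q : ℝ × ℝ => ∫ t in (-R)..R, ∫ u in q.1 * (-R - t)..q.1 * (R - t),
        f u * exp (-(I * u * ((q.2 / q.1 : ℝ) : ℂ))))
      (atTop ×ˢ 𝓟 (Icc (-L) L)) (𝓝 ((2 * R) • ∫ u, f u)) := by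
  rw [show (2 * R) • ∫ u, f u = ∫ _ in (-R)..R, ∫ u, f u by
    rw [intervalIntegral.integral_const, sub_neg_eq_add, two_mul]]
  refine intervalIntegral.tendsto_integral_filter_of_dominated_convergence
    (fun _ => ∫ u, ‖f u‖) (Eventually.of_forall fun q => ?_)
    (Eventually.of_forall fun q => ae_of_all _ fun t _ => ?_) intervalIntegrable_const ?_
  · exact ((hf.mul_exp_neg_I_mul (q.2 / q.1)).continuous_intervalIntegral
      (by fun_prop) (by fun_prop)).aestronglyMeasurable
  · refine (norm_intervalIntegral_le_integral_norm (hf.mul_exp_neg_I_mul _) _ _).trans_eq ?_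
    simp_rw [norm_mul_exp_neg_I_mul]
  · filter_upwards [volume.ae_ne R] with t htR ht
    rw [uIoc_of_le (by linarith)] at ht
    exact tendsto_integral_window hf ⟨ht.1, lt_of_le_of_ne ht.2 htR⟩ L

end Window

theorem stmt9_general (φ : ℝ → ℝ) (hint : MeasureTheory.Integrable φ)
    (hone : ∫ x, φ x = 1) (R L : ℝ) (hR : 0 < R) :
    TendstoUniformlyOn
      (fun (a : ℝ) (σ : ℝ) =>
        ∫ t in (-R)..R, ∫ s in (-R)..R,
          ((a * φ (a * (s - t)) : ℝ) : ℂ) * Complex.exp (-(Complex.I * (s - t) * σ)))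
      (fun _ => ((2 * R : ℝ) : ℂ)) Filter.atTop (Set.Icc (-L) L) := by
  refine tendstoUniformlyOn_const_of_tendsto ?_
  have hφ : Integrable fun u => (φ u : ℂ) := hint.ofReal
  have hlim := tendsto_integral_integral_window hφ hR.le L
  rw [integral_complex_ofReal, hone, ofReal_one, real_smul, mul_one] at hlim
  refine hlim.congr' <| (eventually_gt_atTop 0).prod_inl _ |>.mono fun q hq =>
    intervalIntegral.integral_congr fun t _ => ?_
  exact (intervalIntegral_dilated_mul_exp φ hq.ne' (-R) R t q.2).symm

theorem stmt9 (φ : ℝ → ℝ) (hint : MeasureTheory.Integrable φ) (hpos : ∀ x, 0 ≤ φ x)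
    (hone : ∫ x, φ x = 1) (R L : ℝ) (hR : 0 < R) (hL : 0 < L) :
    TendstoUniformlyOn
      (fun (a : ℝ) (σ : ℝ) =>
        ∫ t in (-R)..R, ∫ s in (-R)..R,
          ((a * φ (a * (s - t)) : ℝ) : ℂ) * Complex.exp (-(Complex.I * (s - t) * σ)))
      (fun _ => ((2 * R : ℝ) : ℂ)) Filter.atTop (Set.Icc (-L) L) :=
  stmt9_general φ hint hone R L hR
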